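/- arXiv:2311.01796 — 2 statements merged into one kernel-verified Lean document; each statement's English description precedes it below -/
import Mathlib

section
/- Let c be a metric on X, ℓ : X → ℝ an L_c-Lipschitz bounded function, D_O and D_A probability measures on X, and ρ > 0. Then E_{x∼D_O}[ℓ(x)] − sup_{Q : W₁(Q, D_A) ≤ ρ} E_{x∼Q}[ℓ(x)] ≤ L_c · max{W₁(D_O, D_A) − ρ, 0}. -/
/-! Take a transport plan from `D_O` to `D_A` of cost `c > ρ` and put `t = ρ / c`. Moving only the
`t`-part of the mass along the plan shows that `Q = t • D_O + (1 - t) • D_A` lies in the `ρ`-ball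
around `D_A`, while the Lipschitz bound `E_{D_O} ℓ - E_{D_A} ℓ ≤ L_c c` gives
`E_{D_O} ℓ - E_Q ℓ = (1 - t) (E_{D_O} ℓ - E_{D_A} ℓ) ≤ L_c (c - ρ)`. Letting `c` decrease to
`W₁(D_O, D_A)` gives the claim; when `W₁(D_O, D_A) ≤ ρ`, `D_O` itself lies in the ball. -/

open MeasureTheory ENNReal

/-- Wasserstein-1 distance between two measures, defined as the infimum over
couplings (probability measures on `X × X` with the given marginals) of the
expected distance. -/
noncomputable def W1 {X : Type*} [MeasurableSpace X] [PseudoEMetricSpace X]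
    (P Q : Measure X) : ℝ≥0∞ :=
  ⨅ π ∈ {π : Measure (X × X) |
      IsProbabilityMeasure π ∧ π.map Prod.fst = P ∧ π.map Prod.snd = Q},
    ∫⁻ p, edist p.1 p.2 ∂π

open Filter Topology

lemma integral_ofReal_smul_add_smul {α E : Type*} [MeasurableSpace α] [NormedAddCommGroup E]
    [NormedSpace ℝ E] {P Q : Measure α} {f : α → E} (hP : Integrable f P) (hQ : Integrable f Q)
    {t : ℝ} (ht₀ : 0 ≤ t) (ht₁ : t ≤ 1) :
    ∫ x, f x ∂(ENNReal.ofReal t • P + ENNReal.ofReal (1 - t) • Q)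
      = t • ∫ x, f x ∂P + (1 - t) • ∫ x, f x ∂Q := by
  rw [integral_add_measure (hP.smul_measure ofReal_ne_top) (hQ.smul_measure ofReal_ne_top),
    integral_smul_measure, integral_smul_measure, toReal_ofReal ht₀,
    toReal_ofReal (sub_nonneg.2 ht₁)]

section Coupling

variable {X : Type*} [MeasurableSpace X] {P Q : Measure X} {π π' : Measure (X × X)}

def IsCoupling (π : Measure (X × X)) (P Q : Measure X) : Prop :=
  IsProbabilityMeasure π ∧ π.map Prod.fst = P ∧ π.map Prod.snd = Q

lemma isCoupling_map_diag (P : Measure X) [IsProbabilityMeasure P] :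
    IsCoupling (P.map fun x => (x, x)) P P := by
  have hdiag : Measurable fun x : X => (x, x) := measurable_id.prodMk measurable_id
  refine ⟨Measure.isProbabilityMeasure_map hdiag.aemeasurable, ?_, ?_⟩
  · rw [Measure.map_map measurable_fst hdiag]; exact Measure.map_id
  · rw [Measure.map_map measurable_snd hdiag]; exact Measure.map_id

lemma IsCoupling.smul_add_smul {P' Q' : Measure X} {a b : ℝ≥0∞} (hπ : IsCoupling π P Q)
    (hπ' : IsCoupling π' P' Q') (hab : a + b = 1) :
    IsCoupling (a • π + b • π') (a • P + b • P') (a • Q + b • Q') := by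
  obtain ⟨_, hπ₁, hπ₂⟩ := hπ
  obtain ⟨_, hπ'₁, hπ'₂⟩ := hπ'
  refine ⟨⟨by simp [hab]⟩, ?_, ?_⟩
  · rw [Measure.map_add _ _ measurable_fst, Measure.map_smul, Measure.map_smul, hπ₁, hπ'₁]
  · rw [Measure.map_add _ _ measurable_snd, Measure.map_smul, Measure.map_smul, hπ₂, hπ'₂]

variable [PseudoEMetricSpace X]

noncomputable def transportCost (π : Measure (X × X)) : ℝ≥0∞ :=
  ∫⁻ p, edist p.1 p.2 ∂π

lemma W1_le_transportCost (hπ : IsCoupling π P Q) : W1 P Q ≤ transportCost π :=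
  iInf₂_le π hπ

lemma exists_isCoupling_transportCost_lt {c : ℝ≥0∞} (h : W1 P Q < c) :
    ∃ π, IsCoupling π P Q ∧ transportCost π < c := by
  obtain ⟨π, hπ, hπc⟩ := by simpa only [W1, iInf_lt_iff, exists_prop] using h
  exact ⟨π, hπ, hπc⟩

lemma transportCost_map_diag (P : Measure X) : transportCost (P.map fun x => (x, x)) = 0 :=
  le_antisymm ((lintegral_map_le _ _).trans_eq (by simp)) zero_le

lemma transportCost_smul_add_smul (a b : ℝ≥0∞) :
    transportCost (a • π + b • π') = a * transportCost π + b * transportCost π' := by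
  simp only [transportCost, lintegral_add_measure, lintegral_smul_measure, smul_eq_mul]

lemma W1_smul_add_smul_le [IsProbabilityMeasure Q] {a b : ℝ≥0∞} (hπ : IsCoupling π P Q)
    (hab : a + b = 1) : W1 (a • P + b • Q) Q ≤ a * transportCost π := by
  have h := hπ.smul_add_smul (isCoupling_map_diag Q) hab
  rw [← add_smul, hab, one_smul] at h
  calc W1 (a • P + b • Q) Q ≤ transportCost _ := W1_le_transportCost h
    _ = a * transportCost π := by
      rw [transportCost_smul_add_smul, transportCost_map_diag, mul_zero, add_zero]

lemma edist_integral_le_mul_transportCost {E : Type*} [NormedAddCommGroup E] [NormedSpace ℝ E]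
    {ℓ : X → E} {K : NNReal} (hℓ : LipschitzWith K ℓ) (hP : Integrable ℓ P)
    (hQ : Integrable ℓ Q) (hπ : IsCoupling π P Q) :
    edist (∫ x, ℓ x ∂P) (∫ x, ℓ x ∂Q) ≤ K * transportCost π := by
  obtain ⟨-, rfl, rfl⟩ := hπ
  rw [integral_map measurable_fst.aemeasurable hP.aestronglyMeasurable,
    integral_map measurable_snd.aemeasurable hQ.aestronglyMeasurable, transportCost,
    ← lintegral_const_mul' _ _ coe_ne_top]
  exact (edist_integral_le_lintegral_edist (hP.comp_measurable measurable_fst)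
    (hQ.comp_measurable measurable_snd)).trans (lintegral_mono fun p => hℓ.edist_le_mul p.1 p.2)

lemma exists_W1_le_integral_sub_le_of_isCoupling {ℓ : X → ℝ} {K : NNReal} (hℓ : LipschitzWith K ℓ)
    [IsProbabilityMeasure P] [IsProbabilityMeasure Q] (hP : Integrable ℓ P)
    (hQ : Integrable ℓ Q) (hπ : IsCoupling π P Q) (hcost : transportCost π ≠ ⊤) {ρ : ℝ}
    (hρ : 0 ≤ ρ) (hρc : ρ < (transportCost π).toReal) :
    ∃ Q' : Measure X, IsProbabilityMeasure Q' ∧ W1 Q' Q ≤ ENNReal.ofReal ρ ∧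
      ∫ x, ℓ x ∂P - ∫ x, ℓ x ∂Q' ≤ K * ((transportCost π).toReal - ρ) := by
  set c := (transportCost π).toReal
  have hc : 0 < c := hρ.trans_lt hρc
  set t := ρ / c
  have ht₀ : 0 ≤ t := div_nonneg hρ hc.le
  have ht₁ : t ≤ 1 := (div_le_one hc).2 hρc.le
  have htc : t * c = ρ := div_mul_cancel₀ ρ hc.ne'
  have hsum : ENNReal.ofReal t + ENNReal.ofReal (1 - t) = 1 := by
    rw [← ofReal_add ht₀ (sub_nonneg.2 ht₁), add_sub_cancel, ofReal_one]
  have hgap : ∫ x, ℓ x ∂P - ∫ x, ℓ x ∂Q ≤ K * c := by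
    have h := edist_integral_le_mul_transportCost hℓ hP hQ hπ
    rw [edist_dist, ofReal_le_iff_le_toReal (mul_ne_top coe_ne_top hcost), toReal_mul,
      coe_toReal, Real.dist_eq] at h
    exact (le_abs_self _).trans h
  refine ⟨ENNReal.ofReal t • P + ENNReal.ofReal (1 - t) • Q, ⟨by simp [hsum]⟩, ?_, ?_⟩
  · calc W1 _ Q ≤ ENNReal.ofReal t * transportCost π := W1_smul_add_smul_le hπ hsum
      _ = ENNReal.ofReal ρ := by rw [← ofReal_toReal hcost, ← ofReal_mul ht₀, htc]
  · rw [integral_ofReal_smul_add_smul hP hQ ht₀ ht₁, smul_eq_mul, smul_eq_mul]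
    calc ∫ x, ℓ x ∂P - (t * ∫ x, ℓ x ∂P + (1 - t) * ∫ x, ℓ x ∂Q)
        = (1 - t) * (∫ x, ℓ x ∂P - ∫ x, ℓ x ∂Q) := by ring
      _ ≤ (1 - t) * (K * c) := by gcongr
      _ = K * (c - ρ) := by rw [← htc]; ring

end Coupling

/-- A plan of positive cost moves mass between points at positive distance, which rules out a
negative constant. -/
lemma nonneg_of_abs_sub_le_mul_dist {X : Type*} [MeasurableSpace X] [PseudoMetricSpace X]
    {ℓ : X → ℝ} {L : ℝ} (hLip : ∀ x x', |ℓ x - ℓ x'| ≤ L * dist x x') {π : Measure (X × X)}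
    (hπ : transportCost π ≠ 0) : 0 ≤ L := by
  by_contra! hL
  have hdist : ∀ p : X × X, edist p.1 p.2 = 0 := fun p => by
    rw [edist_dist, ofReal_eq_zero]
    exact nonpos_of_mul_nonneg_right ((abs_nonneg _).trans (hLip p.1 p.2)) hL
  exact hπ (by simp [transportCost, hdist])

lemma exists_W1_le_integral_sub_le_of_W1_lt {X : Type*} [MeasurableSpace X] [PseudoMetricSpace X]
    {ℓ : X → ℝ} {L : ℝ} (hLip : ∀ x x', |ℓ x - ℓ x'| ≤ L * dist x x') {P Q : Measure X}
    [IsProbabilityMeasure P] [IsProbabilityMeasure Q] (hP : Integrable ℓ P) (hQ : Integrable ℓ Q)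
    {ρ c : ℝ} (hρ : 0 ≤ ρ) (hρW : ENNReal.ofReal ρ < W1 P Q) (hWc : W1 P Q < ENNReal.ofReal c) :
    ∃ Q' : Measure X, IsProbabilityMeasure Q' ∧ W1 Q' Q ≤ ENNReal.ofReal ρ ∧
      ∫ x, ℓ x ∂P - ∫ x, ℓ x ∂Q' ≤ L * (c - ρ) := by
  obtain ⟨π, hπ, hπc⟩ := exists_isCoupling_transportCost_lt hWc
  have hρπ : ρ < (transportCost π).toReal :=
    (ofReal_lt_iff_lt_toReal hρ hπc.ne_top).1 (hρW.trans_le (W1_le_transportCost hπ))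
  have hL : 0 ≤ L := nonneg_of_abs_sub_le_mul_dist hLip (π := π) fun h => by
    simp only [h, toReal_zero] at hρπ; linarith
  obtain ⟨Q', hQ', hQ'ρ, hgap⟩ := exists_W1_le_integral_sub_le_of_isCoupling
    (LipschitzWith.of_dist_le' hLip) hP hQ hπ hπc.ne_top hρ hρπ
  rw [Real.coe_toNNReal _ hL] at hgap
  refine ⟨Q', hQ', hQ'ρ, hgap.trans ?_⟩
  gcongr
  exact (toReal_lt_of_lt_ofReal hπc).le

theorem stmt10_general {X : Type*} [MeasurableSpace X] [MetricSpace X]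
    (ℓ : X → ℝ) (M Lc : ℝ) (hM : ∀ x, |ℓ x| ≤ M) (hmeas : Measurable ℓ)
    (hLip : ∀ x x', |ℓ x - ℓ x'| ≤ Lc * dist x x')
    (DO DA : Measure X) [IsProbabilityMeasure DO] [IsProbabilityMeasure DA]
    (hfin : W1 DO DA ≠ ⊤) (ρ : ℝ) (hρ : 0 < ρ) :
    (∫ x, ℓ x ∂DO)
      - sSup {r | ∃ Q : Measure X, IsProbabilityMeasure Q ∧
          W1 Q DA ≤ ENNReal.ofReal ρ ∧ r = ∫ x, ℓ x ∂Q}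
      ≤ Lc * max ((W1 DO DA).toReal - ρ) 0 := by
  set S := {r | ∃ Q : Measure X, IsProbabilityMeasure Q ∧
    W1 Q DA ≤ ENNReal.ofReal ρ ∧ r = ∫ x, ℓ x ∂Q}
  have hint (Q : Measure X) [IsProbabilityMeasure Q] : Integrable ℓ Q :=
    .of_bound hmeas.aestronglyMeasurable M (.of_forall hM)
  have hbdd : BddAbove S := ⟨M, by
    rintro _ ⟨Q, hQ, -, rfl⟩
    simpa using integral_mono (hint Q) (integrable_const M) fun x => (le_abs_self _).trans (hM x)⟩
  rcases le_or_gt (W1 DO DA) (ENNReal.ofReal ρ) with hW | hW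
  · have hDO : ∫ x, ℓ x ∂DO ≤ sSup S := le_csSup hbdd ⟨DO, inferInstance, hW, rfl⟩
    rw [max_eq_right (sub_nonpos.2 (toReal_le_of_le_ofReal hρ.le hW)), mul_zero]
    linarith
  have hWρ : ρ < (W1 DO DA).toReal := (ofReal_lt_iff_lt_toReal hρ.le hfin).1 hW
  have hle (c : ℝ) (hc : (W1 DO DA).toReal < c) : ∫ x, ℓ x ∂DO - sSup S ≤ Lc * (c - ρ) := by
    obtain ⟨Q, hQ, hQρ, hgap⟩ := exists_W1_le_integral_sub_le_of_W1_lt hLip (hint DO) (hint DA)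
      hρ.le hW ((lt_ofReal_iff_toReal_lt hfin).2 hc)
    have hQS := le_csSup hbdd ⟨Q, hQ, hQρ, rfl⟩
    linarith
  rw [max_eq_left (sub_nonneg.2 hWρ.le)]
  have hlim : Tendsto (fun c => Lc * (c - ρ)) (𝓝[>] (W1 DO DA).toReal)
      (𝓝 (Lc * ((W1 DO DA).toReal - ρ))) :=
    (Continuous.tendsto (by fun_prop) _).mono_left nhdsWithin_le_nhds
  exact ge_of_tendsto hlim (eventually_nhdsWithin_of_forall hle)

/-- For an `L_c`-Lipschitz bounded `ℓ`,
`E_{D_O}[ℓ] - sup_{W₁(Q, D_A) ≤ ρ} E_Q[ℓ] ≤ L_c · max (W₁(D_O, D_A) - ρ) 0`. -/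
theorem stmt10 {X : Type*} [MeasurableSpace X] [MetricSpace X] [BorelSpace X]
    (ℓ : X → ℝ) (M Lc : ℝ) (hM : ∀ x, |ℓ x| ≤ M) (hmeas : Measurable ℓ)
    (hLip : ∀ x x', |ℓ x - ℓ x'| ≤ Lc * dist x x')
    (DO DA : Measure X) [IsProbabilityMeasure DO] [IsProbabilityMeasure DA]
    (hfin : W1 DO DA ≠ ⊤) (ρ : ℝ) (hρ : 0 < ρ) :
    (∫ x, ℓ x ∂DO)
      - sSup {r | ∃ Q : Measure X, IsProbabilityMeasure Q ∧
          W1 Q DA ≤ ENNReal.ofReal ρ ∧ r = ∫ x, ℓ x ∂Q}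
      ≤ Lc * max ((W1 DO DA).toReal - ρ) 0 :=
  stmt10_general ℓ M Lc hM hmeas hLip DO DA hfin ρ hρ
end

section
/- Let c be a metric on X and ℓ : X → ℝ bounded. For a finitely supported empirical measure P̂ = (1/m)∑_{i=1}^m δ_{x_i} and any γ ≥ 0 and ρ ≥ 0, the quantity γρ + (1/m)∑_{i=1}^m φ_γ(x_i), where φ_γ(x) = sup_{x'}(ℓ(x') − γ c(x', x)), is an upper bound on E_{x∼Q}[ℓ(x)] for every probability measure Q with W₁(Q, P̂) ≤ ρ. -/
/-!
For any coupling `π` of `Q` and `P̂`, the definition of `φ_γ` gives the pointwise bound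
`ℓ a ≤ φ_γ b + γ c(a, b)`. Integrating it against `π` yields
`E_Q[ℓ] ≤ E_P̂[φ_γ] + γ ∫ c dπ`, and couplings whose cost approaches `W₁(Q, P̂) ≤ ρ` give the
bound; against the empirical measure `E_P̂[φ_γ]` is the average of the `φ_γ(xᵢ)`.
-/

open MeasureTheory ENNReal

noncomputable def robustSurrogate {X : Type*} [PseudoMetricSpace X] (ℓ : X → ℝ) (γ : ℝ) (z : X) :
    ℝ :=
  ⨆ x', ℓ x' - γ * dist x' z

section RobustSurrogate

variable {X : Type*} [PseudoMetricSpace X] {ℓ : X → ℝ} {γ : ℝ}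

theorem bddAbove_range_sub_mul_dist (hℓ : BddAbove (Set.range ℓ)) (hγ : 0 ≤ γ) (z : X) :
    BddAbove (Set.range fun x' => ℓ x' - γ * dist x' z) := by
  obtain ⟨M, hM⟩ := hℓ
  refine ⟨M, ?_⟩
  rintro _ ⟨x', rfl⟩
  have := hM ⟨x', rfl⟩
  nlinarith [dist_nonneg (x := x') (y := z)]

theorem le_robustSurrogate_add_mul_dist (hℓ : BddAbove (Set.range ℓ)) (hγ : 0 ≤ γ) (a b : X) :
    ℓ a ≤ robustSurrogate ℓ γ b + γ * dist a b := by
  have := le_ciSup (bddAbove_range_sub_mul_dist hℓ hγ b) a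
  unfold robustSurrogate
  linarith

end RobustSurrogate

section Coupling

variable {X : Type*} [MeasurableSpace X] [PseudoMetricSpace X] {f g : X → ℝ} {γ r : ℝ}

theorem integral_le_integral_add_mul_of_coupling {π : Measure (X × X)}
    (hf : Integrable f (π.map Prod.fst)) (hg : Integrable g (π.map Prod.snd))
    (hγ : 0 ≤ γ) (hr : 0 ≤ r) (hfg : ∀ a b, f a ≤ g b + γ * dist a b)
    (hπ : ∫⁻ p, edist p.1 p.2 ∂π ≤ ENNReal.ofReal r) :
    ∫ a, f a ∂π.map Prod.fst ≤ ∫ b, g b ∂π.map Prod.snd + γ * r := by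
  -- The cost need not be measurable on `X × X`, so only the positive part of `f a - g b`,
  -- a lower Lebesgue integral, can be compared with it.
  have hf' : Integrable (fun p : X × X => f p.1) π := hf.comp_measurable measurable_fst
  have hg' : Integrable (fun p : X × X => g p.2) π := hg.comp_measurable measurable_snd
  have hlin : ∫⁻ p, ENNReal.ofReal (f p.1 - g p.2) ∂π ≤ ENNReal.ofReal (γ * r) :=
    calc ∫⁻ p, ENNReal.ofReal (f p.1 - g p.2) ∂π
        ≤ ∫⁻ p, ENNReal.ofReal γ * edist p.1 p.2 ∂π := by
          refine lintegral_mono fun p => ?_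
          rw [edist_dist, ← ENNReal.ofReal_mul hγ]
          exact ENNReal.ofReal_le_ofReal (by linarith [hfg p.1 p.2])
      _ = ENNReal.ofReal γ * ∫⁻ p, edist p.1 p.2 ∂π :=
          lintegral_const_mul' _ _ ENNReal.ofReal_ne_top
      _ ≤ ENNReal.ofReal (γ * r) := by
          rw [ENNReal.ofReal_mul hγ]; gcongr
  have hdiff : ∫ p, (f p.1 - g p.2) ∂π ≤ γ * r := by
    have hsub : Integrable (fun p : X × X => f p.1 - g p.2) π := hf'.sub hg'
    rw [integral_eq_lintegral_pos_part_sub_lintegral_neg_part hsub]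
    have hpos := ENNReal.toReal_le_of_le_ofReal (by positivity) hlin
    linarith [ENNReal.toReal_nonneg (a := ∫⁻ p, ENNReal.ofReal (-(f p.1 - g p.2)) ∂π)]
  rw [integral_sub hf' hg', ← integral_map measurable_fst.aemeasurable hf.1,
    ← integral_map measurable_snd.aemeasurable hg.1] at hdiff
  linarith

theorem integral_le_integral_add_mul_of_W1_le {P Q : Measure X}
    (hf : Integrable f Q) (hg : Integrable g P) (hγ : 0 ≤ γ) (hr : 0 ≤ r)
    (hfg : ∀ a b, f a ≤ g b + γ * dist a b) (hW : W1 Q P ≤ ENNReal.ofReal r) :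
    ∫ a, f a ∂Q ≤ ∫ b, g b ∂P + γ * r := by
  -- The infimum defining `W1` need not be attained: use couplings of cost `< s` for all `s > r`.
  have hcont : Filter.Tendsto (fun s => ∫ b, g b ∂P + γ * s) (nhdsWithin r (Set.Ioi r))
      (nhds (∫ b, g b ∂P + γ * r)) :=
    ((continuous_const.add (continuous_const.mul continuous_id)).tendsto r).mono_left
      nhdsWithin_le_nhds
  refine ge_of_tendsto hcont (eventually_nhdsWithin_of_forall fun s hs => ?_)
  have hlt : W1 Q P < ENNReal.ofReal s :=
    hW.trans_lt ((ENNReal.ofReal_lt_ofReal_iff (hr.trans_lt hs)).2 hs)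
  simp only [W1, iInf_lt_iff] at hlt
  obtain ⟨π, ⟨-, rfl, rfl⟩, hπ⟩ := hlt
  exact integral_le_integral_add_mul_of_coupling hf hg hγ (hr.trans hs.le) hfg hπ.le

end Coupling

section Empirical

variable {X : Type*} [MeasurableSpace X]

noncomputable def empiricalMeasure (x : ℕ → X) (m : ℕ) : Measure X :=
  (m : ℝ≥0∞)⁻¹ • ∑ i ∈ Finset.range m, Measure.dirac (x i)

variable [MeasurableSingletonClass X]

theorem integrable_empiricalMeasure {m : ℕ} (hm : m ≠ 0) (x : ℕ → X) (g : X → ℝ) :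
    Integrable g (empiricalMeasure x m) :=
  (integrable_finsetSum_measure.2 fun _ _ => integrable_dirac enorm_lt_top).smul_measure
    (ENNReal.inv_ne_top.2 (Nat.cast_ne_zero.2 hm))

theorem integral_empiricalMeasure (x : ℕ → X) (m : ℕ) (g : X → ℝ) :
    ∫ y, g y ∂empiricalMeasure x m = (1 / m : ℝ) * ∑ i ∈ Finset.range m, g (x i) := by
  rw [empiricalMeasure, integral_smul_measure,
    integral_finsetSum_measure fun _ _ => integrable_dirac enorm_lt_top]
  simp [integral_dirac]

end Empirical

/-- For the empirical measure `P̂ = (1/m) ∑ δ_{xᵢ}` and any probability measure `Q`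
with `W₁(Q, P̂) ≤ ρ`, the quantity `γρ + (1/m) ∑ φ_γ(xᵢ)` upper bounds `E_Q[ℓ]`. -/
theorem stmt19 {X : Type*} [MeasurableSpace X] [MetricSpace X] [BorelSpace X]
    (ℓ : X → ℝ) (M : ℝ) (hM : ∀ x, |ℓ x| ≤ M) (hmeas : Measurable ℓ)
    (m : ℕ) (hm : 0 < m) (x : ℕ → X) (γ ρ : ℝ) (hγ : 0 ≤ γ) (hρ : 0 ≤ ρ)
    (Q : Measure X) [IsProbabilityMeasure Q]
    (hQ : W1 Q ((m : ℝ≥0∞)⁻¹ • ∑ i ∈ Finset.range m, Measure.dirac (x i))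
      ≤ ENNReal.ofReal ρ) :
    ∫ y, ℓ y ∂Q ≤ γ * ρ
      + (1 / m : ℝ) * ∑ i ∈ Finset.range m,
          ⨆ x' : X, (ℓ x' - γ * dist x' (x i)) := by
  have hℓ_bdd : BddAbove (Set.range ℓ) := ⟨M, by rintro _ ⟨y, rfl⟩; exact le_of_abs_le (hM y)⟩
  have hℓ_int : Integrable ℓ Q := .of_bound hmeas.aestronglyMeasurable M (ae_of_all _ hM)
  have hbound : ∫ y, ℓ y ∂Q ≤ ∫ z, robustSurrogate ℓ γ z ∂empiricalMeasure x m + γ * ρ :=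
    integral_le_integral_add_mul_of_W1_le hℓ_int
      (integrable_empiricalMeasure hm.ne' x _) hγ hρ (le_robustSurrogate_add_mul_dist hℓ_bdd hγ) hQ
  rw [integral_empiricalMeasure] at hbound
  unfold robustSurrogate at hbound
  linarith
end
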